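/- For every real ν ≥ 2 there exists a constant C(ν) > 0, depending only on ν, such that for all probability measures G and Ĝ on (0,∞), every t > 0, and every a > 0: ∫_{|x| > a} | ∫ φ(x; σ²)·g_ν(t; σ²) dG(σ²) − ∫ φ(x; σ²)·g_ν(t; σ²) dĜ(σ²) | dx ≤ (C(ν)/a) · ( ∫_0^∞ (f_G(w; ν+1) − f_Ĝ(w; ν+1))² dw )^{1/2}, where the inequality is understood in [0, ∞]. -/

import Mathlib

open MeasureTheory Real
open scoped ENNReal

/-- `g_ν(t; σ²)`: the density of `(σ²/ν)·χ²_ν`, i.e. the Gamma(ν/2, rate ν/(2σ²)) density. -/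
noncomputable def gdens (ν σ2 t : ℝ) : ℝ :=
  (1 / Real.Gamma (ν / 2)) * (ν / (2 * σ2)) ^ (ν / 2) * t ^ (ν / 2 - 1) *
    Real.exp (-(ν * t) / (2 * σ2))

/-- `φ(x; σ²) = (2πσ²)^{−1/2}·exp(−x²/(2σ²))`: the `N(0, σ²)` density. -/
noncomputable def phidens (x σ2 : ℝ) : ℝ :=
  (2 * Real.pi * σ2) ^ (-(1 / 2) : ℝ) * Real.exp (-(x ^ 2) / (2 * σ2))

/-- `f_G(t; ν) = ∫ g_ν(t; σ²) dG(σ²)`: the marginal density of `S²`. -/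
noncomputable def fGdens (G : Measure ℝ) (ν t : ℝ) : ℝ :=
  ∫ σ2, gdens ν σ2 t ∂G

/-!
Write `w(x) = (ν t + x²)/(ν + 1)`. As a function of `σ²`, `φ(x; σ²) g_ν(t; σ²)` is a multiple
`c(x)` of `g_{ν+1}(w(x); σ²)`, so the difference of the two mixtures is `c(x) Δ(w(x))` with
`Δ = f_G(·; ν+1) − f_Ĝ(·; ν+1)`. The integrand is even in `x`, and on `x > a` Cauchy–Schwarz
separates the two factors: for `ν ≥ 2` one has `c(x)² ≲ 1/x²`, whose integral is `≲ 1/a`, while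
the substitution `w = w(x)`, with `dx = (ν+1)/(2x) dw ≤ (ν+1)/(2a) dw`, bounds `∫ Δ(w(x))² dx`
by `(ν+1)/(2a) ∫ Δ²`.
-/

open Set

noncomputable section

/-- The constant `K(ν)` collecting the normalizing constants of `φ`, `g_ν` and `g_{ν+1}`. -/
def jointDensityConst (ν : ℝ) : ℝ :=
  (2 * π) ^ (-(1 / 2) : ℝ) * (ν / 2) ^ (ν / 2) * Gamma ((ν + 1) / 2) /
    (Gamma (ν / 2) * ((ν + 1) / 2) ^ ((ν + 1) / 2))

def pooledVariance (ν t x : ℝ) : ℝ := (ν * t + x ^ 2) / (ν + 1)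

def jointDensityWeight (ν t x : ℝ) : ℝ :=
  jointDensityConst ν * t ^ (ν / 2 - 1) * pooledVariance ν t x ^ (-(ν - 1) / 2)

def tailConst (ν : ℝ) : ℝ :=
  √(jointDensityConst ν ^ 2 * ((ν + 1) / ν) ^ (ν - 2) * (ν + 1) * ((ν + 1) / 2))

end

lemma div_two_mul_rpow {c s : ℝ} (hc : 0 ≤ c) (hs : 0 < s) (p : ℝ) :
    (c / (2 * s)) ^ p = (c / 2) ^ p * s ^ (-p) := by
  rw [show c / (2 * s) = c / 2 * s⁻¹ by ring, mul_rpow (by positivity) (by positivity),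
    inv_rpow hs.le, rpow_neg hs.le]

lemma lintegral_Ioi_ofReal_div_sq {a D : ℝ} (ha : 0 < a) (hD : 0 ≤ D) :
    ∫⁻ x in Ioi a, ENNReal.ofReal (D / x ^ 2) = ENNReal.ofReal (D / a) := by
  have hpow : ∀ x ∈ Ioi a, D / x ^ 2 = D * x ^ (-2 : ℝ) := fun x hx => by
    rw [rpow_neg (ha.trans hx).le, rpow_two, div_eq_mul_inv]
  have hint : IntegrableOn (fun x : ℝ => D * x ^ (-2 : ℝ)) (Ioi a) :=
    (integrableOn_Ioi_rpow_of_lt (by norm_num) ha).const_mul D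
  rw [setLIntegral_congr_fun measurableSet_Ioi (fun x hx => by rw [hpow x hx]),
    ← ofReal_integral_eq_lintegral_ofReal hint, integral_const_mul,
    integral_Ioi_rpow_of_lt (by norm_num) ha]
  · norm_num [rpow_neg_one, div_eq_mul_inv]
  · filter_upwards [ae_restrict_mem measurableSet_Ioi] with x hx
    have := ha.trans hx
    positivity

/-- On `x > a` the substitution `w = (b + x²)/c` has `dx = c/(2x) dw ≤ c/(2a) dw`. -/
lemma lintegral_Ioi_comp_add_sq_div_le {a b c : ℝ} (ha : 0 < a) (hb : 0 ≤ b) (hc : 0 < c)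
    (g : ℝ → ℝ≥0∞) :
    ∫⁻ x in Ioi a, g ((b + x ^ 2) / c) ≤ ENNReal.ofReal (c / (2 * a)) * ∫⁻ w in Ioi 0, g w := by
  set W : ℝ → ℝ := fun x => (b + x ^ 2) / c
  have hW' : ∀ x ∈ Ioi a, HasDerivWithinAt W (2 * x / c) (Ioi a) x := fun x _ => by
    simpa using (((hasDerivAt_pow 2 x).const_add b).div_const c).hasDerivWithinAt
  have hW_inj : InjOn W (Ioi a) := fun x hx y hy hxy => by
    have : x ^ 2 = y ^ 2 := by simpa [W, hc.ne'] using hxy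
    exact (pow_left_inj₀ (ha.trans hx).le (ha.trans hy).le two_ne_zero).1 this
  have hW_pos : W '' Ioi a ⊆ Ioi 0 := by
    rintro _ ⟨x, hx, rfl⟩
    have hx0 : 0 < x := ha.trans hx
    exact show 0 < (b + x ^ 2) / c by positivity
  have hjac : ∀ x ∈ Ioi a, 1 ≤ ENNReal.ofReal (c / (2 * a)) * ENNReal.ofReal |2 * x / c| := by
    intro x hx
    have hx0 : 0 < x := ha.trans hx
    rw [abs_of_pos (by positivity : 0 < 2 * x / c), ← ENNReal.ofReal_mul (by positivity),
      ENNReal.one_le_ofReal, show c / (2 * a) * (2 * x / c) = x / a by field_simp, one_le_div ha]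
    exact hx.le
  calc ∫⁻ x in Ioi a, g (W x)
      ≤ ∫⁻ x in Ioi a, ENNReal.ofReal (c / (2 * a)) * (ENNReal.ofReal |2 * x / c| * g (W x)) := by
        refine setLIntegral_mono' measurableSet_Ioi fun x hx => ?_
        rw [← mul_assoc]
        exact le_mul_of_one_le_left' (hjac x hx)
    _ = ENNReal.ofReal (c / (2 * a)) * ∫⁻ w in W '' Ioi a, g w := by
        rw [lintegral_const_mul' _ _ ENNReal.ofReal_ne_top,
          lintegral_image_eq_lintegral_abs_deriv_mul measurableSet_Ioi hW' hW_inj]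
    _ ≤ ENNReal.ofReal (c / (2 * a)) * ∫⁻ w in Ioi 0, g w := by
        gcongr

lemma lintegral_abs_gt_of_even {f : ℝ → ℝ≥0∞} (hf : ∀ x, f (-x) = f x) {a : ℝ} (ha : 0 ≤ a) :
    ∫⁻ x in {x : ℝ | a < |x|}, f x = 2 * ∫⁻ x in Ioi a, f x := by
  have hset : {x : ℝ | a < |x|} = Iio (-a) ∪ Ioi a := by
    ext x
    simp only [mem_ofPred_eq, mem_union, mem_Iio, mem_Ioi, lt_abs, lt_neg]
    tauto
  have hdisj : Disjoint (Iio (-a)) (Ioi a) :=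
    Set.disjoint_left.2 fun x hx hx' => by simp only [mem_Iio, mem_Ioi] at hx hx'; linarith
  have hrefl : ∫⁻ x in Iio (-a), f x = ∫⁻ x in Ioi a, f x := by
    rw [← image_neg_Ioi, lintegral_image_eq_lintegral_abs_deriv_mul measurableSet_Ioi
      (fun x _ => (hasDerivAt_neg x).hasDerivWithinAt) neg_injective.injOn]
    simp [hf]
  rw [hset, lintegral_union measurableSet_Ioi hdisj, hrefl, two_mul]

lemma lintegral_mul_le_sqrt_mul_sqrt {α : Type*} [MeasurableSpace α] (μ : Measure α)
    {f g : α → ℝ≥0∞} (hf : AEMeasurable f μ) (hg : AEMeasurable g μ) :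
    ∫⁻ a, f a * g a ∂μ ≤ (∫⁻ a, f a ^ 2 ∂μ) ^ (1 / 2 : ℝ) * (∫⁻ a, g a ^ 2 ∂μ) ^ (1 / 2 : ℝ) := by
  simpa only [ENNReal.rpow_two, Pi.mul_apply] using
    ENNReal.lintegral_mul_le_Lp_mul_Lq μ HolderConjugate.two_two hf hg

lemma measurable_fGdens (G : Measure ℝ) [SFinite G] (ν : ℝ) : Measurable (fGdens G ν) := by
  have hg : Measurable fun p : ℝ × ℝ => gdens ν p.2 p.1 := by unfold gdens; fun_prop
  exact (hg.stronglyMeasurable.integral_prod_right' (ν := G)).measurable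

lemma ofReal_rpow_half_mul_rpow_half {p q : ℝ} (hp : 0 ≤ p) (hq : 0 ≤ q) {a : ℝ} (ha : 0 < a)
    (I : ℝ≥0∞) :
    ENNReal.ofReal (p / a) ^ (1 / 2 : ℝ) * (ENNReal.ofReal (q / a) * I) ^ (1 / 2 : ℝ) =
      ENNReal.ofReal (√(p * q) / a) * I ^ (1 / 2 : ℝ) := by
  rw [ENNReal.mul_rpow_of_nonneg _ _ (by norm_num), ← mul_assoc,
    ← ENNReal.mul_rpow_of_nonneg _ _ (by norm_num), ← ENNReal.ofReal_mul (by positivity),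
    ENNReal.ofReal_rpow_of_nonneg (by positivity) (by norm_num), ← sqrt_eq_rpow,
    show p / a * (q / a) = p * q / a ^ 2 by ring, sqrt_div' _ (by positivity), sqrt_sq ha.le]

section JointDensity

variable {ν t : ℝ}

lemma jointDensityConst_pos (hν : 0 < ν) : 0 < jointDensityConst ν := by
  unfold jointDensityConst
  have := Gamma_pos_of_pos (by linarith : 0 < (ν + 1) / 2)
  have := Gamma_pos_of_pos (by linarith : 0 < ν / 2)
  positivity

lemma pooledVariance_pos (hν : 0 < ν) (ht : 0 < t) (x : ℝ) : 0 < pooledVariance ν t x := by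
  unfold pooledVariance; positivity

lemma jointDensityWeight_pos (hν : 0 < ν) (ht : 0 < t) (x : ℝ) : 0 < jointDensityWeight ν t x :=
  mul_pos (mul_pos (jointDensityConst_pos hν) (rpow_pos_of_pos ht _))
    (rpow_pos_of_pos (pooledVariance_pos hν ht x) _)

/-- Normal–gamma conjugacy. -/
lemma phidens_mul_gdens (hν : 0 < ν) (ht : 0 < t) {σ2 : ℝ} (hσ : 0 < σ2) (x : ℝ) :
    phidens x σ2 * gdens ν σ2 t =
      jointDensityWeight ν t x * gdens (ν + 1) σ2 (pooledVariance ν t x) := by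
  have hw := pooledVariance_pos hν ht x
  set w := pooledVariance ν t x with hw_def
  have hσ_pow : σ2 ^ (-(1 / 2) : ℝ) * σ2 ^ (-(ν / 2)) = σ2 ^ (-((ν + 1) / 2)) := by
    rw [← rpow_add hσ]; ring_nf
  have hexp : exp (-(x ^ 2) / (2 * σ2)) * exp (-(ν * t) / (2 * σ2)) =
      exp (-((ν + 1) * w) / (2 * σ2)) := by
    rw [← exp_add, hw_def, pooledVariance]
    congr 1
    field_simp
    ring
  unfold phidens gdens jointDensityWeight jointDensityConst
  rw [mul_rpow (by positivity) hσ.le, div_two_mul_rpow hν.le hσ,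
    div_two_mul_rpow (by linarith) hσ, ← hσ_pow, ← hexp, ← hw_def]
  field_simp
  rw [← rpow_add hw]
  ring_nf
  rw [rpow_zero]

lemma jointDensityWeight_sq_le (hν : 2 ≤ ν) (ht : 0 < t) {x : ℝ} (hx : x ≠ 0) :
    jointDensityWeight ν t x ^ 2 ≤
      jointDensityConst ν ^ 2 * ((ν + 1) / ν) ^ (ν - 2) * (ν + 1) / x ^ 2 := by
  have hν0 : 0 < ν := by linarith
  have hw := pooledVariance_pos hν0 ht x
  set w := pooledVariance ν t x with hw_def
  have hsq : jointDensityWeight ν t x ^ 2 = jointDensityConst ν ^ 2 * (t / w) ^ (ν - 2) * w⁻¹ := by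
    have ht_pow : (t ^ (ν / 2 - 1)) ^ 2 = t ^ (ν - 2) := by
      rw [← rpow_natCast, ← rpow_mul ht.le]; ring_nf
    have hw_pow : (w ^ (-(ν - 1) / 2)) ^ 2 = (w ^ (ν - 2))⁻¹ * w⁻¹ := by
      rw [← rpow_natCast, ← rpow_mul hw.le, ← rpow_neg hw.le, ← rpow_neg_one, ← rpow_add hw]
      ring_nf
    rw [jointDensityWeight, ← hw_def, mul_pow, mul_pow, ht_pow, hw_pow,
      div_rpow ht.le hw.le]
    ring
  have hratio : t / w ≤ (ν + 1) / ν := by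
    rw [div_le_div_iff₀ hw hν0, hw_def, pooledVariance]
    field_simp
    nlinarith [sq_nonneg x]
  have hinv : w⁻¹ ≤ (ν + 1) / x ^ 2 := by
    rw [inv_le_iff_one_le_mul₀' hw, hw_def, pooledVariance]
    field_simp
    rw [le_div_iff₀ (by positivity)]
    nlinarith [mul_pos hν0 ht]
  rw [hsq, mul_div_assoc]
  gcongr

lemma integral_phidens_mul_gdens (hν : 0 < ν) (ht : 0 < t) {μ : Measure ℝ}
    (hμ : ∀ᵐ σ2 ∂μ, 0 < σ2) (x : ℝ) :
    ∫ σ2, phidens x σ2 * gdens ν σ2 t ∂μ =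
      jointDensityWeight ν t x * fGdens μ (ν + 1) (pooledVariance ν t x) := by
  rw [fGdens, ← integral_const_mul]
  exact integral_congr_ae (hμ.mono fun σ2 hσ => phidens_mul_gdens hν ht hσ x)

lemma lintegral_Ioi_jointDensityWeight_sq_le (hν : 2 ≤ ν) (ht : 0 < t) {a : ℝ} (ha : 0 < a) :
    ∫⁻ x in Ioi a, ENNReal.ofReal (jointDensityWeight ν t x) ^ 2 ≤
      ENNReal.ofReal (jointDensityConst ν ^ 2 * ((ν + 1) / ν) ^ (ν - 2) * (ν + 1) / a) := by
  have hν0 : 0 < ν := by linarith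
  have hD : 0 ≤ jointDensityConst ν ^ 2 * ((ν + 1) / ν) ^ (ν - 2) * (ν + 1) := by positivity
  rw [← lintegral_Ioi_ofReal_div_sq ha hD]
  refine setLIntegral_mono' measurableSet_Ioi fun x hx => ?_
  rw [← ENNReal.ofReal_pow (jointDensityWeight_pos hν0 ht x).le]
  exact ENNReal.ofReal_le_ofReal (jointDensityWeight_sq_le hν ht (ha.trans hx).ne')

lemma tailConst_pos (hν : 0 < ν) : 0 < tailConst ν := by
  have := jointDensityConst_pos hν
  unfold tailConst
  positivity

end JointDensity

lemma lintegral_Ioi_abs_sub_integral_phidens_mul_gdens_le {ν : ℝ} (hν : 2 ≤ ν)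
    {G G' : Measure ℝ} [SFinite G] [SFinite G'] (hG : ∀ᵐ σ2 ∂G, 0 < σ2)
    (hG' : ∀ᵐ σ2 ∂G', 0 < σ2) {t a : ℝ} (ht : 0 < t) (ha : 0 < a) :
    ∫⁻ x in Ioi a, ENNReal.ofReal |(∫ σ2, phidens x σ2 * gdens ν σ2 t ∂G) -
        (∫ σ2, phidens x σ2 * gdens ν σ2 t ∂G')|
      ≤ ENNReal.ofReal (tailConst ν / a) *
        (∫⁻ w in Ioi 0, ENNReal.ofReal ((fGdens G (ν + 1) w - fGdens G' (ν + 1) w) ^ 2)) ^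
          (1 / 2 : ℝ) := by
  have hν0 : 0 < ν := by linarith
  set Δ : ℝ → ℝ := fun w => fGdens G (ν + 1) w - fGdens G' (ν + 1) w
  have hΔ : Measurable Δ := (measurable_fGdens G _).sub (measurable_fGdens G' _)
  have hpooled : Measurable (pooledVariance ν t) := by unfold pooledVariance; fun_prop
  have hweight : Measurable (jointDensityWeight ν t) := by
    unfold jointDensityWeight; exact hpooled.pow_const _ |>.const_mul _
  have hfactor : ∀ x, ENNReal.ofReal |(∫ σ2, phidens x σ2 * gdens ν σ2 t ∂G) -
      (∫ σ2, phidens x σ2 * gdens ν σ2 t ∂G')| =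
      ENNReal.ofReal (jointDensityWeight ν t x) * ENNReal.ofReal |Δ (pooledVariance ν t x)| := by
    intro x
    rw [integral_phidens_mul_gdens hν0 ht hG, integral_phidens_mul_gdens hν0 ht hG', ← mul_sub,
      abs_mul, abs_of_pos (jointDensityWeight_pos hν0 ht x),
      ENNReal.ofReal_mul (jointDensityWeight_pos hν0 ht x).le]
  have hsubst : ∫⁻ x in Ioi a, ENNReal.ofReal |Δ (pooledVariance ν t x)| ^ 2 ≤
      ENNReal.ofReal ((ν + 1) / 2 / a) * ∫⁻ w in Ioi 0, ENNReal.ofReal (Δ w ^ 2) := by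
    simp_rw [← ENNReal.ofReal_pow (abs_nonneg _), sq_abs, div_div]
    exact lintegral_Ioi_comp_add_sq_div_le (b := ν * t) (c := ν + 1)
      (g := fun w => ENNReal.ofReal (Δ w ^ 2)) ha (by positivity) (by linarith)
  calc ∫⁻ x in Ioi a, ENNReal.ofReal |(∫ σ2, phidens x σ2 * gdens ν σ2 t ∂G) -
        (∫ σ2, phidens x σ2 * gdens ν σ2 t ∂G')|
      = ∫⁻ x in Ioi a,
          ENNReal.ofReal (jointDensityWeight ν t x) * ENNReal.ofReal |Δ (pooledVariance ν t x)| :=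
        lintegral_congr hfactor
    _ ≤ (∫⁻ x in Ioi a, ENNReal.ofReal (jointDensityWeight ν t x) ^ 2) ^ (1 / 2 : ℝ) *
          (∫⁻ x in Ioi a, ENNReal.ofReal |Δ (pooledVariance ν t x)| ^ 2) ^ (1 / 2 : ℝ) :=
        lintegral_mul_le_sqrt_mul_sqrt _ hweight.ennreal_ofReal.aemeasurable
          (hΔ.comp hpooled).abs.ennreal_ofReal.aemeasurable
    _ ≤ ENNReal.ofReal (jointDensityConst ν ^ 2 * ((ν + 1) / ν) ^ (ν - 2) * (ν + 1) / a) ^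
            (1 / 2 : ℝ) *
          (ENNReal.ofReal ((ν + 1) / 2 / a) * ∫⁻ w in Ioi 0, ENNReal.ofReal (Δ w ^ 2)) ^
            (1 / 2 : ℝ) := by
        gcongr
        exact lintegral_Ioi_jointDensityWeight_sq_le hν ht ha
    _ = ENNReal.ofReal (tailConst ν / a) *
          (∫⁻ w in Ioi 0, ENNReal.ofReal (Δ w ^ 2)) ^ (1 / 2 : ℝ) :=
        ofReal_rpow_half_mul_rpow_half (by positivity) (by positivity) ha _

/-- tail `L¹` bound on the difference of joint null densities in terms of
the `L²` distance of the marginals at degrees of freedom `ν + 1`, with a constant `C(ν)`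
depending only on `ν ≥ 2`; the inequality is understood in `[0, ∞]`. -/
theorem stmt7 (ν : ℝ) (hν : 2 ≤ ν) :
    ∃ C : ℝ, 0 < C ∧
      ∀ (G G' : Measure ℝ), IsProbabilityMeasure G → IsProbabilityMeasure G' →
        (∀ᵐ σ2 ∂G, 0 < σ2) → (∀ᵐ σ2 ∂G', 0 < σ2) →
        ∀ t a : ℝ, 0 < t → 0 < a →
          (∫⁻ x in {x : ℝ | a < |x|},
              ENNReal.ofReal |(∫ σ2, phidens x σ2 * gdens ν σ2 t ∂G) -
                (∫ σ2, phidens x σ2 * gdens ν σ2 t ∂G')|)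
            ≤ ENNReal.ofReal (C / a) *
              (∫⁻ w in Set.Ioi (0 : ℝ),
                  ENNReal.ofReal ((fGdens G (ν + 1) w - fGdens G' (ν + 1) w) ^ 2)) ^
                (1 / 2 : ℝ) := by
  refine ⟨2 * tailConst ν, mul_pos two_pos (tailConst_pos (by linarith)), ?_⟩
  intro G G' _ _ hG hG' t a ht ha
  rw [lintegral_abs_gt_of_even (fun x => by simp only [phidens, neg_sq]) ha.le, mul_div_assoc,
    ENNReal.ofReal_mul zero_le_two, ENNReal.ofReal_ofNat, mul_assoc]
  gcongr
  exact lintegral_Ioi_abs_sub_integral_phidens_mul_gdens_le hν hG hG' ht ha
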